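/- Let z_1, ..., z_N be the zeros of the Hermite polynomial H_N and s_{2l} := \sum_{j=1}^N z_j^{2l}. Then for every l \ge 1, s_{2l} = (1/2) \sum_{m=0}^{l-1} s_{2(l-1-m)} s_{2m} - ((2l-1)/2) s_{2(l-1)}, with s_0 = N. -/

import Mathlib

/-!
The zeros of `H_N` are simple, so `H_N = c ∏ₖ (X - z_k)`, and at a zero `z_j` one has
`H_N''(z_j) = 2 H_N'(z_j) ∑_{k ≠ j} 1 / (z_j - z_k)` with `H_N'(z_j) ≠ 0`. Comparing with the
Hermite equation `H'' = 2X H' - 2N H` gives Stieltjes' relations `∑_{k ≠ j} 1 / (z_j - z_k) = z_j`.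
Multiplying them by `z_j ^ n`, summing over `j` and symmetrizing in `j, k` gives
`2 s_{n+1} = ∑_{j ≠ k} (z_j ^ n - z_k ^ n) / (z_j - z_k)`, a sum of geometric sums, whence
`2 s_{n+1} = ∑_{m < n} s_m s_{n-1-m} - n s_{n-1}`. This recursion forces the odd power sums to
vanish, and for `n = 2l - 1` only the even terms survive.
-/

open Polynomial Finset

/-- The physicists' Hermite polynomials, orthogonal w.r.t. the weight `e^{-x^2}`. -/
noncomputable def physHermite : ℕ → Polynomial ℝ
  | 0 => 1
  | 1 => 2 * X
  | n + 2 => 2 * X * physHermite (n + 1) - C (2 * ((n : ℝ) + 1)) * physHermite n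

open Lagrange

theorem physHermite_one : physHermite 1 = 2 * X := rfl

theorem physHermite_succ_succ (n : ℕ) : physHermite (n + 2) =
    2 * X * physHermite (n + 1) - C (2 * ((n : ℝ) + 1)) * physHermite n := rfl

theorem derivative_physHermite_succ (n : ℕ) :
    derivative (physHermite (n + 1)) = C (2 * ((n : ℝ) + 1)) * physHermite n := by
  induction n using Nat.twoStepInduction with
  | zero => simp [physHermite, C_ofNat]
  | one =>
    rw [physHermite_succ_succ, physHermite_one]
    simp [physHermite, map_ofNat]
    ring_nf
  | more n ih1 ih2 =>
    rw [physHermite_succ_succ (n + 1)]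
    simp only [derivative_sub, derivative_mul, derivative_C, derivative_X, derivative_ofNat, ih1,
      ih2]
    rw [physHermite_succ_succ n]
    simp only [map_add, map_mul, map_one, C_ofNat, C_eq_natCast]
    push_cast
    ring

theorem derivative_derivative_physHermite (n : ℕ) : derivative (derivative (physHermite n)) =
    2 * X * derivative (physHermite n) - C (2 * (n : ℝ)) * physHermite n := by
  match n with
  | 0 => simp [physHermite]
  | 1 => simp [physHermite_one, C_ofNat]; ring_nf
  | n + 2 =>
    rw [derivative_physHermite_succ (n + 1), derivative_C_mul, derivative_physHermite_succ n,
      physHermite_succ_succ n]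
    simp only [map_mul, map_add, map_natCast, map_one, C_ofNat]
    push_cast
    ring

theorem natDegree_physHermite_le (n : ℕ) : (physHermite n).natDegree ≤ n := by
  induction n using Nat.twoStepInduction with
  | zero => simp [physHermite]
  | one => rw [physHermite_one, ← C_ofNat]; exact (natDegree_C_mul_le _ _).trans natDegree_X_le
  | more n ih1 ih2 =>
    rw [physHermite_succ_succ n, ← C_ofNat, mul_assoc]
    refine (natDegree_sub_le _ _).trans (max_le ?_ ?_)
    · exact (natDegree_C_mul_le _ _).trans (natDegree_mul_le.trans (by grind [natDegree_X_le]))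
    · exact (natDegree_C_mul_le _ _).trans (ih1.trans (by omega))

theorem coeff_physHermite_self (n : ℕ) : (physHermite n).coeff n = 2 ^ n := by
  induction n using Nat.twoStepInduction with
  | zero => simp [physHermite]
  | one => simp [physHermite_one, ← C_ofNat]
  | more n ih1 ih2 =>
    rw [physHermite_succ_succ n, coeff_sub, ← C_ofNat, mul_assoc, coeff_C_mul, coeff_C_mul,
      coeff_X_mul, ih2, coeff_eq_zero_of_natDegree_lt ((natDegree_physHermite_le n).trans_lt
      (by omega))]
    ring

theorem degree_physHermite (n : ℕ) : (physHermite n).degree = n :=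
  degree_eq_of_le_of_coeff_ne_zero (degree_le_of_natDegree_le (natDegree_physHermite_le n))
    (by rw [coeff_physHermite_self]; positivity)

section Nodal

variable {K ι : Type*} [Field K] {s : Finset ι} {v : ι → K}

theorem eq_C_leadingCoeff_mul_nodal {p : K[X]} (hvs : Set.InjOn v s)
    (hroot : ∀ i ∈ s, p.eval (v i) = 0) (hdeg : p.degree = #s) :
    p = C p.leadingCoeff * nodal s v := by
  have hp : p ≠ 0 := by rintro rfl; simp at hdeg
  have hdeg' : p.degree = (C p.leadingCoeff * nodal s v).degree := by
    rw [degree_C_mul (leadingCoeff_ne_zero.2 hp), degree_nodal, hdeg]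
  refine sub_eq_zero.1 <| eq_zero_of_degree_lt_of_eval_index_eq_zero s hvs ?_ fun i hi => ?_
  · rw [← hdeg]
    refine degree_sub_lt_left hdeg' hp ?_
    rw [leadingCoeff_mul, leadingCoeff_C, nodal_monic.leadingCoeff, mul_one]
  · rw [eval_sub, hroot i hi, eval_mul, eval_nodal_at_node hi, mul_zero, sub_zero]

variable [DecidableEq ι]

theorem eval_derivative_nodal {x : K} (hx : ∀ i ∈ s, x ≠ v i) :
    (derivative (nodal s v)).eval x = (∑ i ∈ s, (x - v i)⁻¹) * (nodal s v).eval x := by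
  rw [derivative_nodal, eval_finsetSum, sum_mul]
  refine sum_congr rfl fun i hi => ?_
  rw [eval_nodal, eval_nodal, ← prod_erase_mul _ _ hi, mul_comm,
    mul_inv_cancel_right₀ (sub_ne_zero.2 (hx i hi))]

theorem eval_derivative_derivative_nodal_at_node (hvs : Set.InjOn v s) {i : ι} (hi : i ∈ s) :
    (derivative (derivative (nodal s v))).eval (v i) =
      2 * (∑ k ∈ s.erase i, (v i - v k)⁻¹) * (derivative (nodal s v)).eval (v i) := by
  have hne : ∀ k ∈ s.erase i, v i ≠ v k := fun k hk h =>
    (mem_erase.1 hk).1 (hvs (mem_erase.1 hk).2 hi h.symm)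
  rw [eval_nodal_derivative_eval_node_eq hi, nodal_eq_mul_nodal_erase hi, mul_assoc,
    ← eval_derivative_nodal hne]
  simp only [derivative_mul, derivative_sub, derivative_X, derivative_C, sub_zero, one_mul,
    derivative_add, zero_mul, eval_add, eval_mul, eval_sub, eval_X, eval_C, sub_self]
  ring

end Nodal

def powerSum {K ι : Type*} [CommSemiring K] [Fintype ι] (z : ι → K) (n : ℕ) : K :=
  ∑ j, z j ^ n

section PowerSum

variable {K ι : Type*} [Field K] [Fintype ι] [DecidableEq ι] {z : ι → K}

theorem sum_sum_erase_pow_sub_div_sub (hz : Function.Injective z) (n : ℕ) :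
    ∑ j, ∑ k ∈ univ.erase j, (z j ^ n - z k ^ n) / (z j - z k) =
      ∑ m ∈ range n, powerSum z m * powerSum z (n - 1 - m) - n * powerSum z (n - 1) := by
  have hgeom : ∀ j, ∀ k ∈ univ.erase j, (z j ^ n - z k ^ n) / (z j - z k) =
      ∑ m ∈ range n, z j ^ m * z k ^ (n - 1 - m) := fun j k hk => by
    rw [← geom_sum₂_mul, mul_div_cancel_right₀ _ (sub_ne_zero.2 (hz.ne (mem_erase.1 hk).1.symm))]
  have hterm : ∀ m ∈ range n, ∑ j, ∑ k ∈ univ.erase j, z j ^ m * z k ^ (n - 1 - m) =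
      powerSum z m * powerSum z (n - 1 - m) - powerSum z (n - 1) := fun m hm => by
    simp only [← mul_sum, sum_erase_eq_sub (mem_univ _), ← pow_add,
      Nat.add_sub_cancel' (Nat.le_sub_one_of_lt (mem_range.1 hm)), sum_sub_distrib, powerSum,
      sum_mul]
  rw [sum_congr rfl fun j _ => (sum_congr rfl (hgeom j)).trans sum_comm, sum_comm,
    sum_congr rfl hterm, sum_sub_distrib, sum_const, card_range, nsmul_eq_mul]

theorem two_mul_powerSum_succ (hz : Function.Injective z)
    (hS : ∀ j, ∑ k ∈ univ.erase j, (z j - z k)⁻¹ = z j) (n : ℕ) :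
    2 * powerSum z (n + 1) =
      ∑ m ∈ range n, powerSum z m * powerSum z (n - 1 - m) - n * powerSum z (n - 1) := by
  rw [← sum_sum_erase_pow_sub_div_sub hz]
  have hpow : powerSum z (n + 1) = ∑ j, ∑ k ∈ univ.erase j, z j ^ n / (z j - z k) := by
    simp only [powerSum, pow_succ, div_eq_mul_inv, ← mul_sum, hS]
  have hswap : ∑ j, ∑ k ∈ univ.erase j, z k ^ n / (z k - z j) =
      ∑ j, ∑ k ∈ univ.erase j, z j ^ n / (z j - z k) :=
    sum_comm' (by simp [ne_comm])
  rw [two_mul, hpow]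
  nth_rw 2 [← hswap]
  rw [← sum_add_distrib]
  refine sum_congr rfl fun j _ => ?_
  rw [← sum_add_distrib]
  refine sum_congr rfl fun k _ => ?_
  rw [← neg_sub (z j), div_neg, ← sub_eq_add_neg, sub_div]

theorem powerSum_eq_zero_of_odd [NeZero (2 : K)] (hz : Function.Injective z)
    (hS : ∀ j, ∑ k ∈ univ.erase j, (z j - z k)⁻¹ = z j) {n : ℕ} (hn : Odd n) :
    powerSum z n = 0 := by
  induction n using Nat.strong_induction_on with
  | _ n ih =>
    obtain ⟨k, rfl⟩ := hn
    have hsum : ∑ m ∈ range (2 * k), powerSum z m * powerSum z (2 * k - 1 - m) = 0 :=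
      sum_eq_zero fun m hm => by
        rw [mem_range] at hm
        rcases Nat.even_or_odd m with ⟨r, rfl⟩ | hm_odd
        · rw [ih (2 * k - 1 - (r + r)) (by omega) ⟨k - 1 - r, by omega⟩, mul_zero]
        · rw [ih m (by omega) hm_odd, zero_mul]
    have hlast : ((2 * k : ℕ) : K) * powerSum z (2 * k - 1) = 0 := by
      rcases Nat.eq_zero_or_pos k with rfl | hk
      · simp
      · rw [ih _ (by omega) ⟨k - 1, by omega⟩, mul_zero]
    have hrec := two_mul_powerSum_succ hz hS (2 * k)
    rwa [hsum, hlast, sub_zero, mul_eq_zero, or_iff_right two_ne_zero] at hrec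

end PowerSum

theorem sum_range_two_mul_add_one_of_odd_eq_zero {M : Type*} [AddCommMonoid M] {f : ℕ → M}
    (hf : ∀ m, Odd m → f m = 0) (k : ℕ) :
    ∑ m ∈ range (2 * k + 1), f m = ∑ t ∈ range (k + 1), f (2 * t) := by
  induction k with
  | zero => simp
  | succ k ih =>
    rw [show 2 * (k + 1) + 1 = 2 * k + 1 + 1 + 1 by ring, sum_range_succ, sum_range_succ, ih,
      hf _ ⟨k, rfl⟩, add_zero, sum_range_succ _ (k + 1), mul_add_one]

theorem sum_inv_sub_eq_of_physHermite_eval_eq_zero {N : ℕ} {z : Fin N → ℝ}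
    (hz : Function.Injective z) (hroot : ∀ i, (physHermite N).eval (z i) = 0) (j : Fin N) :
    ∑ k ∈ univ.erase j, (z j - z k)⁻¹ = z j := by
  have hH := eq_C_leadingCoeff_mul_nodal hz.injOn (fun i _ => hroot i)
    (by rw [degree_physHermite, card_univ, Fintype.card_fin])
  have hc : (physHermite N).leadingCoeff ≠ 0 :=
    leadingCoeff_ne_zero.2 fun h => by simpa [h] using degree_physHermite N
  have hder : (derivative (nodal univ z)).eval (z j) ≠ 0 := by
    rw [eval_nodal_derivative_eval_node_eq (mem_univ j)]
    exact eval_nodal_not_at_node fun k hk h => (mem_erase.1 hk).1 (hz h).symm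
  have hode := congrArg (eval (z j)) (derivative_derivative_physHermite N)
  simp only [eval_sub, eval_mul, eval_C, hroot j, mul_zero, sub_zero] at hode
  set c := (physHermite N).leadingCoeff
  rw [hH] at hode
  simp only [derivative_C_mul, eval_mul, eval_C, eval_ofNat, eval_X,
    eval_derivative_derivative_nodal_at_node hz.injOn (mem_univ j)] at hode
  refine mul_right_cancel₀ (mul_ne_zero (mul_ne_zero two_ne_zero hc) hder) ?_
  linear_combination hode

theorem stmt_3 (N : ℕ) (z : Fin N → ℝ)
    (hord : ∀ i j : Fin N, i < j → z j < z i)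
    (hroot : ∀ i, (physHermite N).eval (z i) = 0)
    (s : ℕ → ℝ) (hs : ∀ l, s l = ∑ j, (z j) ^ l) :
    s 0 = N ∧
      ∀ l : ℕ, 1 ≤ l →
        s (2 * l) = (1 / 2) * ∑ m ∈ Finset.range l, s (2 * (l - 1 - m)) * s (2 * m)
          - ((2 * (l : ℝ) - 1) / 2) * s (2 * (l - 1)) := by
  obtain rfl : s = powerSum z := funext hs
  have hz : Function.Injective z := StrictAnti.injective hord
  have hS := sum_inv_sub_eq_of_physHermite_eval_eq_zero hz hroot
  refine ⟨by simp [powerSum], fun l hl => ?_⟩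
  obtain ⟨k, rfl⟩ : ∃ k, l = k + 1 := ⟨l - 1, by omega⟩
  have hrec := two_mul_powerSum_succ hz hS (2 * k + 1)
  rw [sum_range_two_mul_add_one_of_odd_eq_zero
    (fun m hm => by rw [powerSum_eq_zero_of_odd hz hS hm, zero_mul])] at hrec
  have hsum : ∑ m ∈ range (k + 1), powerSum z (2 * (k + 1 - 1 - m)) * powerSum z (2 * m) =
      ∑ t ∈ range (k + 1), powerSum z (2 * t) * powerSum z (2 * k + 1 - 1 - 2 * t) :=
    sum_congr rfl fun m _ => by
      rw [mul_comm, show 2 * (k + 1 - 1 - m) = 2 * k + 1 - 1 - 2 * m by omega]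
  rw [hsum, show 2 * (k + 1 - 1) = 2 * k + 1 - 1 by omega,
    show 2 * (k + 1) = 2 * k + 1 + 1 by ring]
  push_cast at hrec ⊢
  linarith
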